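/- arXiv:1502.02586 — 5 statements merged into one kernel-verified Lean document; each statement's English description precedes it below -/
import Mathlib

section
/- Let G be a compact Hausdorff topological group acting continuously on a Hausdorff space X, and let U be a G-categorical subset of X which contains a fixed point x₀ ∈ X^G. Then U is equivariantly contractible to x₀; that is, there exists a G-homotopy H' : U × [0,1] → X with H'(x,0) = x and H'(x,1) = x₀ for every x ∈ U. -/
open Set unitInterval

/-- The orbit of a point under a `SMul` of `G` on `X`. -/
def smulOrbit (G : Type*) {X : Type*} [SMul G X] (x : X) : Set X :=
  Set.range fun g : G => g • x

/-- A subset `U` of a `G`-space `X` is `G`-invariant if `GU ⊆ U`. -/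
def IsInvariantSet (G : Type*) {X : Type*} [SMul G X] (U : Set X) : Prop :=
  ∀ g : G, ∀ x ∈ U, g • x ∈ U

/-- `H : U × [0,1] → X` is a `G`-homotopy: it is continuous and
`g • H(x,t) = H(g • x, t)` whenever both sides make sense. -/
def IsGHomotopy (G : Type*) {X : Type*} [SMul G X] [TopologicalSpace X]
    (U : Set X) (H : U × I → X) : Prop :=
  Continuous H ∧
    ∀ (g : G) (x : U) (hgx : g • (x : X) ∈ U) (t : I),
      g • H (x, t) = H (⟨g • (x : X), hgx⟩, t)

/-- A `G`-invariant open subset `U` of `X` is `G`-categorical if there is a `G`-homotopy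
`H : U × [0,1] → X` starting at the inclusion and ending inside a single orbit. -/
def IsGCategorical (G : Type*) {X : Type*} [SMul G X] [TopologicalSpace X] (U : Set X) : Prop :=
  IsOpen U ∧ IsInvariantSet G U ∧
    ∃ H : U × I → X, IsGHomotopy G U H ∧ (∀ x : U, H (x, 0) = x) ∧
      ∃ z : X, ∀ x : U, H (x, 1) ∈ smulOrbit G z

/-- The equivariant Lusternik–Schnirelmann category of a `G`-space: the least number of
`G`-categorical open sets covering `X`, as an element of `ℕ∞` (`⊤` if no finite cover exists). -/
noncomputable def eqvCat (G X : Type*) [SMul G X] [TopologicalSpace X] : ℕ∞ :=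
  sInf {c : ℕ∞ | ∃ n : ℕ, c = n ∧ ∃ U : Fin n → Set X,
    (∀ i, IsGCategorical G (U i)) ∧ (⋃ i, U i) = Set.univ}

/-- A subset `U` of `X` is categorical if it is open and contractible to a point within `X`. -/
def IsCategoricalSet {X : Type*} [TopologicalSpace X] (U : Set X) : Prop :=
  IsOpen U ∧ ∃ H : U × I → X, Continuous H ∧ (∀ x : U, H (x, 0) = x) ∧
    ∃ p : X, ∀ x : U, H (x, 1) = p

/-- The (classical) Lusternik–Schnirelmann category of `X`, valued in `ℕ∞`. -/
noncomputable def LScat (X : Type*) [TopologicalSpace X] : ℕ∞ :=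
  sInf {c : ℕ∞ | ∃ n : ℕ, c = n ∧ ∃ U : Fin n → Set X,
    (∀ i, IsCategoricalSet (U i)) ∧ (⋃ i, U i) = Set.univ}

/-- The fixed point set `X^G`. -/
def fixedPts (G X : Type*) [SMul G X] : Set X := {x : X | ∀ g : G, g • x = x}

/-- The (trivial) restriction of the `G`-action to the fixed point set `X^G`. -/
def fixedSMul (G X : Type*) [SMul G X] : SMul G ↥(fixedPts G X) := ⟨fun _ x => x⟩

/-! The homotopy `H` of a `G`-categorical set `U` moves the fixed point `x₀ ∈ U` along a path of
fixed points, so its endpoint `H(x₀, 1)` is a fixed point lying in the orbit that receives all of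
`U`; that orbit is therefore the single point `H(x₀, 1)`. Following `H` and then running the path
`t ↦ H(x₀, t)` backwards contracts `U` equivariantly onto `x₀`. -/

section Concat

variable {α X : Type*}

noncomputable def concatHomotopy (H₁ H₂ : α × I → X) (p : α × I) : X :=
  if (p.2 : ℝ) ≤ 1 / 2 then H₁ (p.1, projIcc 0 1 zero_le_one (2 * p.2))
  else H₂ (p.1, projIcc 0 1 zero_le_one (2 * p.2 - 1))

theorem concatHomotopy_zero (H₁ H₂ : α × I → X) (a : α) :
    concatHomotopy H₁ H₂ (a, 0) = H₁ (a, 0) := by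
  norm_num [concatHomotopy, projIcc]

theorem concatHomotopy_one (H₁ H₂ : α × I → X) (a : α) :
    concatHomotopy H₁ H₂ (a, 1) = H₂ (a, 1) := by
  norm_num [concatHomotopy, projIcc]

theorem Continuous.concatHomotopy [TopologicalSpace α] [TopologicalSpace X]
    {H₁ H₂ : α × I → X} (h₁ : Continuous H₁) (h₂ : Continuous H₂)
    (h : ∀ a, H₁ (a, 1) = H₂ (a, 0)) :
    Continuous (concatHomotopy H₁ H₂) := by
  refine Continuous.if_le (h₁.comp (by fun_prop)) (h₂.comp (by fun_prop)) (by fun_prop)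
    continuous_const fun p hp => ?_
  norm_num [hp, projIcc]
  exact h p.1

end Concat

theorem eq_of_mem_smulOrbit_of_mem_fixedPts {G X : Type*} [Group G] [MulAction G X] {a b z : X}
    (ha : a ∈ smulOrbit G z) (hb : b ∈ smulOrbit G z) (hfix : b ∈ fixedPts G X) : a = b := by
  obtain ⟨g, rfl⟩ := ha
  obtain ⟨h, rfl⟩ := hb
  calc g • z = (g * h⁻¹) • h • z := by rw [mul_smul, inv_smul_smul]
    _ = h • z := hfix _

section GHomotopy

variable {G X : Type*} [SMul G X] [TopologicalSpace X] {U : Set X}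

theorem IsGHomotopy.apply_mem_fixedPts {H : U × I → X} (hH : IsGHomotopy G U H) {x : U}
    (hx : (x : X) ∈ fixedPts G X) (t : I) : H (x, t) ∈ fixedPts G X := fun g => by
  have hgx : g • (x : X) ∈ U := (hx g).symm ▸ x.2
  simpa only [hx g] using hH.2 g x hgx t

theorem isGHomotopy_of_mem_fixedPts {γ : I → X} (hγ : Continuous γ)
    (hfix : ∀ t, γ t ∈ fixedPts G X) : IsGHomotopy G U fun p => γ p.2 :=
  ⟨hγ.comp continuous_snd, fun g _ _ t => hfix t g⟩

theorem IsGHomotopy.concatHomotopy {H₁ H₂ : U × I → X} (h₁ : IsGHomotopy G U H₁)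
    (h₂ : IsGHomotopy G U H₂) (h : ∀ x, H₁ (x, 1) = H₂ (x, 0)) :
    IsGHomotopy G U (concatHomotopy H₁ H₂) := by
  refine ⟨h₁.1.concatHomotopy h₂.1 h, fun g x hgx t => ?_⟩
  unfold _root_.concatHomotopy
  split_ifs
  · exact h₁.2 g x hgx _
  · exact h₂.2 g x hgx _

end GHomotopy

theorem gcategorical_contractible_to_fixed_point_general
    {G X : Type*} [Group G] [TopologicalSpace X] [MulAction G X]
    (U : Set X) (hU : IsGCategorical G U) (x₀ : X) (hx₀U : x₀ ∈ U)
    (hfix : x₀ ∈ fixedPts G X) :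
    ∃ H' : U × I → X, IsGHomotopy G U H' ∧ (∀ x : U, H' (x, 0) = x) ∧
      ∀ x : U, H' (x, 1) = x₀ := by
  obtain ⟨-, -, H, hH, h0, z, hz⟩ := hU
  set x₀' : U := ⟨x₀, hx₀U⟩
  have hpath : ∀ t, H (x₀', t) ∈ fixedPts G X := hH.apply_mem_fixedPts hfix
  have hend (x : U) : H (x, 1) = H (x₀', 1) :=
    eq_of_mem_smulOrbit_of_mem_fixedPts (hz x) (hz x₀') (hpath 1)
  have hback : IsGHomotopy G U fun p => H (x₀', σ p.2) :=
    isGHomotopy_of_mem_fixedPts (hH.1.comp (by fun_prop)) fun t => hpath (σ t)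
  refine ⟨concatHomotopy H _, hH.concatHomotopy hback fun x => ?_, fun x => ?_, fun x => ?_⟩
  · simp only [symm_zero, hend]
  · rw [concatHomotopy_zero, h0]
  · rw [concatHomotopy_one, symm_one, h0]

/-- Let `G` be a compact Hausdorff topological group acting continuously on a
Hausdorff space `X`, and let `U` be a `G`-categorical subset of `X` containing a fixed point
`x₀ ∈ X^G`. Then `U` is equivariantly contractible to `x₀`: there is a `G`-homotopy
`H' : U × [0,1] → X` with `H'(x,0) = x` and `H'(x,1) = x₀` for every `x ∈ U`. -/
theorem gcategorical_contractible_to_fixed_point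
    {G X : Type*} [Group G] [TopologicalSpace G] [IsTopologicalGroup G] [CompactSpace G]
    [T2Space G] [TopologicalSpace X] [T2Space X] [MulAction G X] [ContinuousSMul G X]
    (U : Set X) (hU : IsGCategorical G U) (x₀ : X) (hx₀U : x₀ ∈ U)
    (hfix : x₀ ∈ fixedPts G X) :
    ∃ H' : U × I → X, IsGHomotopy G U H' ∧ (∀ x : U, H' (x, 0) = x) ∧
      ∀ x : U, H' (x, 1) = x₀ :=
  gcategorical_contractible_to_fixed_point_general U hU x₀ hx₀U hfix
end

section
/- Let G be a compact Hausdorff topological group acting continuously on a Hausdorff space X, and suppose {U_i}_{i=1}^n is a G-categorical covering of X. Then {U_i ∩ X^G}_{i=1}^n (discarding empty intersections) is a G-categorical covering of X^G, and consequently |π₀(X^G)| ≤ cat(X^G) = cat_G(X^G) ≤ cat_G(X), where |π₀(X^G)| denotes the number of path-components of the fixed point set. -/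
open Set unitInterval

/-
A `G`-homotopy commutes with the action, so it carries fixed points to fixed points; and an
orbit meeting `X^G` is a single fixed point. Hence a `G`-categorical set `U` restricts to a
homotopy of `U ∩ X^G` inside `X^G` ending at one point, and restricting covers gives
`cat_G(X^G) ≤ cat_G(X)`. On `X^G` the action is trivial, so orbits are points and
`G`-categorical sets are just categorical sets, giving `cat(X^G) = cat_G(X^G)`. Finally a
categorical set lies in a single path component, so `|π₀| ≤ cat`.
-/

theorem iUnion_preimage_eq_univ {ι Y Z : Type*} (f : Y → Z) {U : ι → Set Z}
    (hcov : ⋃ i, U i = univ) : ⋃ i, f ⁻¹' U i = univ := by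
  rw [← preimage_iUnion, hcov, preimage_univ]

section FixedPoints

variable {G X : Type*} [Group G] [MulAction G X]

theorem mem_fixedPts_of_smul_mem {z : X} (g : G) (h : g • z ∈ fixedPts G X) :
    z ∈ fixedPts G X := by
  intro k
  have hconj := h (g * k * g⁻¹)
  rw [mul_smul, mul_smul, inv_smul_smul] at hconj
  exact smul_left_cancel g hconj

theorem eq_of_mem_smulOrbit_of_mem_fixedPts_s4 {y z : X} (hy : y ∈ smulOrbit G z)
    (hfix : y ∈ fixedPts G X) : y = z := by
  obtain ⟨g, rfl⟩ := hy
  exact mem_fixedPts_of_smul_mem g hfix g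

variable [TopologicalSpace X]

theorem IsGHomotopy.mem_fixedPts {U : Set X} {H : U × I → X} (hH : IsGHomotopy G U H)
    {x : U} (hx : (x : X) ∈ fixedPts G X) (t : I) : H (x, t) ∈ fixedPts G X := by
  intro g
  rw [hH.2 g x ((hx g).symm ▸ x.2) t]
  congr
  exact hx g

theorem IsGCategorical.preimage_fixedPts {U : Set X} (hU : IsGCategorical G U)
    [Nonempty (fixedPts G X)] :
    @IsGCategorical G (fixedPts G X) (fixedSMul G X) _ {x | (x : X) ∈ U} := by
  classical
  let := fixedSMul G X
  obtain ⟨hopen, -, H, hH, H0, z, hz⟩ := hU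
  set V : Set (fixedPts G X) := {x | (x : X) ∈ U}
  let ι : V → U := fun x => ⟨x.1, x.2⟩
  have hHfix : ∀ (x : V) (t : I), H (ι x, t) ∈ fixedPts G X :=
    fun x => hH.mem_fixedPts x.1.2
  have hend : ∀ x : V, H (ι x, 1) = z :=
    fun x => eq_of_mem_smulOrbit_of_mem_fixedPts_s4 (hz _) (hHfix x 1)
  -- `z` is fixed unless `V` is empty, in which case any fixed point is an endpoint.
  let p : fixedPts G X :=
    if hzfix : z ∈ fixedPts G X then ⟨z, hzfix⟩ else Classical.arbitrary _
  refine ⟨hopen.preimage continuous_subtype_val, fun _ _ hx => hx,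
    fun q => ⟨H (ι q.1, q.2), hHfix q.1 q.2⟩, ⟨?_, fun _ _ _ _ => rfl⟩,
    fun x => Subtype.ext (H0 (ι x)), p, fun x => ⟨1, ?_⟩⟩
  · exact (hH.1.comp (by fun_prop)).subtype_mk _
  · have hzfix : z ∈ fixedPts G X := hend x ▸ hHfix x 1
    show p = _
    exact Subtype.ext (by simp only [p, dif_pos hzfix, hend x])

end FixedPoints

section TrivialAction

variable {G Y : Type*} [Nonempty G] [SMul G Y] [TopologicalSpace Y]

theorem isGCategorical_iff_isCategoricalSet (htriv : ∀ (g : G) (y : Y), g • y = y)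
    {V : Set Y} : IsGCategorical G V ↔ IsCategoricalSet V := by
  constructor
  · rintro ⟨hopen, -, H, ⟨hcont, -⟩, H0, z, hz⟩
    refine ⟨hopen, H, hcont, H0, z, fun x => ?_⟩
    obtain ⟨g, hg⟩ := hz x
    rw [← hg]
    exact htriv g z
  · rintro ⟨hopen, H, hcont, H0, p, hp⟩
    refine ⟨hopen, fun g x hx => (htriv g x).symm ▸ hx, H, ⟨hcont, fun g x hgx t => ?_⟩, H0, p,
      fun x => ⟨Classical.arbitrary G, (htriv _ p).trans (hp x).symm⟩⟩
    rw [htriv]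
    congr
    exact Subtype.ext (htriv g x).symm

theorem LScat_eq_eqvCat (htriv : ∀ (g : G) (y : Y), g • y = y) : LScat Y = eqvCat G Y := by
  simp only [LScat, eqvCat, isGCategorical_iff_isCategoricalSet htriv]

end TrivialAction

section PathComponents

variable {Y : Type*} [TopologicalSpace Y]

theorem IsCategoricalSet.joined {W : Set Y} (hW : IsCategoricalSet W) {x y : Y} (hx : x ∈ W)
    (hy : y ∈ W) : Joined x y := by
  obtain ⟨-, H, hcont, H0, p, hp⟩ := hW
  have joined_p : ∀ w : W, Joined (w : Y) p := fun w =>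
    ⟨{ toFun := fun t => H (w, t)
       continuous_toFun := hcont.comp (continuous_const.prodMk continuous_id)
       source' := H0 w
       target' := hp w }⟩
  exact (joined_p ⟨x, hx⟩).trans (joined_p ⟨y, hy⟩).symm

theorem card_zerothHomotopy_le_of_cover {n : ℕ} (W : Fin n → Set Y)
    (hW : ∀ i, IsCategoricalSet (W i)) (hcov : ⋃ i, W i = univ) :
    ENat.card (ZerothHomotopy Y) ≤ n := by
  have hmem : ∀ y : Y, ∃ i, y ∈ W i := fun y => mem_iUnion.mp (hcov ▸ mem_univ y)
  choose idx hidx using hmem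
  let rep := Function.surjInv (ZerothHomotopy.mk_surjective (X := Y))
  have hinj : Function.Injective (idx ∘ rep) := by
    intro q q' (hqq' : idx (rep q) = idx (rep q'))
    have hrep := Function.surjInv_eq (ZerothHomotopy.mk_surjective (X := Y))
    rw [← hrep q, ← hrep q']
    exact Quotient.sound ((hW _).joined (hidx (rep q)) (hqq' ▸ hidx (rep q')))
  simpa using ENat.card_le_card_of_injective hinj

theorem card_zerothHomotopy_le_LScat : ENat.card (ZerothHomotopy Y) ≤ LScat Y := by
  refine le_sInf ?_
  rintro _ ⟨n, rfl, W, hW, hcov⟩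
  exact card_zerothHomotopy_le_of_cover W hW hcov

end PathComponents

theorem eqvCat_eq_zero_of_isEmpty (G Y : Type*) [SMul G Y] [TopologicalSpace Y] [IsEmpty Y] :
    eqvCat G Y = 0 :=
  nonpos_iff_eq_zero.mp <|
    sInf_le ⟨0, rfl, Fin.elim0, fun i => i.elim0, eq_univ_of_forall isEmptyElim⟩

theorem eqvCat_fixedPts_le {G X : Type*} [Group G] [MulAction G X] [TopologicalSpace X] :
    @eqvCat G (fixedPts G X) (fixedSMul G X) _ ≤ eqvCat G X := by
  rcases isEmpty_or_nonempty (fixedPts G X) with hempty | hne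
  · rw [@eqvCat_eq_zero_of_isEmpty G _ (fixedSMul G X)]
    exact zero_le
  refine le_sInf ?_
  rintro _ ⟨n, rfl, U, hU, hcov⟩
  exact sInf_le ⟨n, rfl, fun i => {x | (x : X) ∈ U i}, fun i => (hU i).preimage_fixedPts,
    iUnion_preimage_eq_univ Subtype.val hcov⟩

theorem gcategorical_cover_fixedPts_general
    {G X : Type*} [Group G] [TopologicalSpace X] [MulAction G X]
    (n : ℕ) (U : Fin n → Set X) (hcat : ∀ i, IsGCategorical G (U i))
    (hcov : (⋃ i, U i) = Set.univ) :
    (∀ i, {x : ↥(fixedPts G X) | (x : X) ∈ U i}.Nonempty →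
        @IsGCategorical G ↥(fixedPts G X) (fixedSMul G X) inferInstance
          {x : ↥(fixedPts G X) | (x : X) ∈ U i}) ∧
    (⋃ i, {x : ↥(fixedPts G X) | (x : X) ∈ U i}) = Set.univ ∧
    ENat.card (ZerothHomotopy ↥(fixedPts G X)) ≤ LScat ↥(fixedPts G X) ∧
    LScat ↥(fixedPts G X) = @eqvCat G ↥(fixedPts G X) (fixedSMul G X) inferInstance ∧
    @eqvCat G ↥(fixedPts G X) (fixedSMul G X) inferInstance ≤ eqvCat G X := by
  let := fixedSMul G X
  refine ⟨fun i ⟨x, _⟩ => ?_, iUnion_preimage_eq_univ Subtype.val hcov,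
    card_zerothHomotopy_le_LScat, LScat_eq_eqvCat fun _ _ => rfl, eqvCat_fixedPts_le⟩
  have : Nonempty (fixedPts G X) := ⟨x⟩
  exact (hcat i).preimage_fixedPts

/-- Let `G` be a compact Hausdorff topological group acting continuously on a
Hausdorff space `X`, and suppose `{U_i}_{i=1}^n` is a `G`-categorical covering of `X`. Then
`{U_i ∩ X^G}` (discarding empty intersections) is a `G`-categorical covering of `X^G`, and
consequently `|π₀(X^G)| ≤ cat(X^G) = cat_G(X^G) ≤ cat_G(X)`. -/
theorem gcategorical_cover_fixedPts
    {G X : Type*} [Group G] [TopologicalSpace G] [IsTopologicalGroup G] [CompactSpace G]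
    [T2Space G] [TopologicalSpace X] [T2Space X] [MulAction G X] [ContinuousSMul G X]
    (n : ℕ) (U : Fin n → Set X) (hcat : ∀ i, IsGCategorical G (U i))
    (hcov : (⋃ i, U i) = Set.univ) :
    (∀ i, {x : ↥(fixedPts G X) | (x : X) ∈ U i}.Nonempty →
        @IsGCategorical G ↥(fixedPts G X) (fixedSMul G X) inferInstance
          {x : ↥(fixedPts G X) | (x : X) ∈ U i}) ∧
    (⋃ i, {x : ↥(fixedPts G X) | (x : X) ∈ U i}) = Set.univ ∧
    ENat.card (ZerothHomotopy ↥(fixedPts G X)) ≤ LScat ↥(fixedPts G X) ∧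
    LScat ↥(fixedPts G X) = @eqvCat G ↥(fixedPts G X) (fixedSMul G X) inferInstance ∧
    @eqvCat G ↥(fixedPts G X) (fixedSMul G X) inferInstance ≤ eqvCat G X :=
  gcategorical_cover_fixedPts_general n U hcat hcov
end

section
/- Let G be a topological group acting on a topological space X. Then X admits a minimal G-categorical sequence of length n if and only if cat_G(X) = n. -/
open Set unitInterval

/-- A `G`-categorical sequence of length `n`: a sequence of open `G`-invariant sets
`∅ = A₀ ⊊ A₁ ⊊ ⋯ ⊊ Aₙ = X` such that each difference `A_{i+1} − A_i` is contained in a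
`G`-categorical subset of `X`. -/
def IsGCatSequence (G : Type*) {X : Type*} [SMul G X] [TopologicalSpace X]
    (A : ℕ → Set X) (n : ℕ) : Prop :=
  A 0 = ∅ ∧ A n = Set.univ ∧
  (∀ i < n, A i ⊂ A (i + 1)) ∧
  (∀ i ≤ n, IsOpen (A i)) ∧
  (∀ i ≤ n, IsInvariantSet G (A i)) ∧
  ∀ i < n, ∃ U : Set X, IsGCategorical G U ∧ A (i + 1) \ A i ⊆ U

/-!
A `G`-cat sequence of length `n` yields a cover of `X` by `n` `G`-categorical sets: take a
`G`-categorical set containing each difference `A (i+1) \ A i`. Conversely, the partial unions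
`U₀ ∪ ⋯ ∪ U_{i-1}` of a cover of minimal size `k` form a `G`-cat sequence of length `k`: the
inclusions are strict because otherwise `U_i` could be dropped from the cover. Hence the least
length of a `G`-cat sequence is `cat_G(X)`.
-/

section

variable {G X : Type*} [SMul G X]

lemma IsInvariantSet.iUnion {ι : Sort*} {U : ι → Set X} (hU : ∀ i, IsInvariantSet G (U i)) :
    IsInvariantSet G (⋃ i, U i) := by
  intro g x hx
  obtain ⟨i, hi⟩ := mem_iUnion.1 hx
  exact mem_iUnion.2 ⟨i, hU i g x hi⟩

variable [TopologicalSpace X]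

lemma eqvCat_le_card {ι : Type*} [Fintype ι] {U : ι → Set X}
    (hU : ∀ i, IsGCategorical G (U i)) (hcov : ⋃ i, U i = univ) :
    eqvCat G X ≤ Fintype.card ι := by
  let e := (Fintype.equivFin ι).symm
  refine sInf_le ⟨_, rfl, U ∘ e, fun i => hU (e i), ?_⟩
  rwa [Function.comp_def, e.surjective.iUnion_comp U]

lemma exists_cover_of_eqvCat_eq {k : ℕ} (h : eqvCat G X = k) :
    ∃ U : Fin k → Set X, (∀ i, IsGCategorical G (U i)) ∧ ⋃ i, U i = univ := by
  have hne : {c : ℕ∞ | ∃ n : ℕ, c = n ∧ ∃ U : Fin n → Set X,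
      (∀ i, IsGCategorical G (U i)) ∧ ⋃ i, U i = univ}.Nonempty := by
    by_contra hempty
    rw [not_nonempty_iff_eq_empty] at hempty
    exact ENat.top_ne_natCast k (by rw [← h, eqvCat, hempty, sInf_empty])
  obtain ⟨m, hm, hU⟩ := csInf_mem hne
  obtain rfl : m = k := by exact_mod_cast hm.symm.trans h
  exact hU

lemma IsGCatSequence.exists_cover {A : ℕ → Set X} {n : ℕ} (hA : IsGCatSequence G A n) :
    ∃ U : Fin n → Set X, (∀ i, IsGCategorical G (U i)) ∧ ⋃ i, U i = univ := by
  obtain ⟨hA0, hAn, -, -, -, hstep⟩ := hA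
  choose U hU hdiff using hstep
  refine ⟨fun i => U i i.2, fun i => hU i i.2, eq_univ_of_univ_subset ?_⟩
  have hsub : ∀ i ≤ n, A i ⊆ ⋃ j : Fin n, U j j.2 := by
    intro i hi
    induction i with
    | zero => simp [hA0]
    | succ i ih =>
      intro x hx
      by_cases hxi : x ∈ A i
      · exact ih (by omega) hxi
      · exact mem_iUnion.2 ⟨⟨i, hi⟩, hdiff i hi ⟨hx, hxi⟩⟩
  exact hAn ▸ hsub n le_rfl

lemma eqvCat_le_of_isGCatSequence {A : ℕ → Set X} {n : ℕ} (hA : IsGCatSequence G A n) :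
    eqvCat G X ≤ n := by
  obtain ⟨U, hU, hcov⟩ := hA.exists_cover
  simpa using eqvCat_le_card hU hcov

section PartialUnion

variable {k : ℕ} {U : Fin k → Set X}

lemma partialUnion_ssubset_succ (hU : ∀ i, IsGCategorical G (U i)) (hcov : ⋃ i, U i = univ)
    (hk : eqvCat G X = k) {i : ℕ} (hi : i < k) :
    ⋃ (j : Fin k) (_ : (j : ℕ) < i), U j ⊂ ⋃ (j : Fin k) (_ : (j : ℕ) < i + 1), U j := by
  refine ssubset_of_subset_not_subset
    (iUnion₂_mono' fun j hj => ⟨j, by omega, subset_rfl⟩) fun heq => ?_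
  let p : Fin k := ⟨i, hi⟩
  have hUp : U p ⊆ ⋃ (j : {j // j ≠ p}), U j := by
    intro x hx
    obtain ⟨j, hji, hxj⟩ := mem_iUnion₂.1 (heq (mem_iUnion₂.2 ⟨p, by simp [p], hx⟩))
    exact mem_iUnion.2 ⟨⟨j, fun h => by simp [h, p] at hji⟩, hxj⟩
  have hcov' : ⋃ (j : {j // j ≠ p}), U j = univ := by
    refine eq_univ_of_univ_subset fun x _ => ?_
    obtain ⟨j, hxj⟩ := mem_iUnion.1 (hcov ▸ mem_univ x : x ∈ ⋃ i, U i)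
    by_cases hjp : j = p
    · exact hUp (hjp ▸ hxj)
    · exact mem_iUnion.2 ⟨⟨j, hjp⟩, hxj⟩
  have hle := eqvCat_le_card (fun j : {j // j ≠ p} => hU j) hcov'
  rw [hk, Fintype.card_subtype_compl, Fintype.card_fin, Fintype.card_unique] at hle
  have : k ≤ k - 1 := by exact_mod_cast hle
  omega

lemma isGCatSequence_partialUnion (hU : ∀ i, IsGCategorical G (U i)) (hcov : ⋃ i, U i = univ)
    (hk : eqvCat G X = k) :
    IsGCatSequence G (fun i => ⋃ (j : Fin k) (_ : (j : ℕ) < i), U j) k := by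
  refine ⟨by simp, ?_, fun i hi => partialUnion_ssubset_succ hU hcov hk hi,
    fun i _ => isOpen_biUnion fun j _ => (hU j).1,
    fun i _ => IsInvariantSet.iUnion fun j => IsInvariantSet.iUnion fun _ => (hU j).2.1,
    fun i hi => ⟨U ⟨i, hi⟩, hU _, ?_⟩⟩
  · simpa using hcov
  · rintro x ⟨hx, hxi⟩
    obtain ⟨j, hji, hxj⟩ := mem_iUnion₂.1 hx
    have hji : (j : ℕ) = i := by
      by_contra hne
      exact hxi (mem_iUnion₂.2 ⟨j, by omega, hxj⟩)
    rwa [show j = ⟨i, hi⟩ from Fin.ext hji] at hxj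

end PartialUnion

lemma exists_isGCatSequence_of_eqvCat_eq {k : ℕ} (hk : eqvCat G X = k) :
    ∃ A : ℕ → Set X, IsGCatSequence G A k :=
  let ⟨_, hU, hcov⟩ := exists_cover_of_eqvCat_eq hk
  ⟨_, isGCatSequence_partialUnion hU hcov hk⟩

end

theorem minimal_gcatSequence_iff_eqvCat_general
    {G X : Type*} [Group G]
    [TopologicalSpace X] [MulAction G X] (n : ℕ) :
    (∃ A : ℕ → Set X, IsGCatSequence G A n ∧
        ∀ (m : ℕ) (B : ℕ → Set X), IsGCatSequence G B m → n ≤ m)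
      ↔ eqvCat G X = n := by
  constructor
  · rintro ⟨A, hA, hmin⟩
    have hle := eqvCat_le_of_isGCatSequence hA
    obtain ⟨k, hk⟩ := ENat.ne_top_iff_exists.1 (ne_top_of_le_ne_top (ENat.natCast_ne_top n) hle)
    obtain ⟨B, hB⟩ := exists_isGCatSequence_of_eqvCat_eq hk.symm
    have hkn : k ≤ n := by exact_mod_cast hk ▸ hle
    rw [← hk, le_antisymm hkn (hmin k B hB)]
  · intro h
    obtain ⟨A, hA⟩ := exists_isGCatSequence_of_eqvCat_eq h
    exact ⟨A, hA, fun m B hB => by exact_mod_cast h ▸ eqvCat_le_of_isGCatSequence hB⟩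

/-- Let `G` be a topological group acting on a topological space `X`. Then `X`
admits a minimal `G`-categorical sequence of length `n` if and only if `cat_G(X) = n`. -/
theorem minimal_gcatSequence_iff_eqvCat
    {G X : Type*} [Group G] [TopologicalSpace G] [IsTopologicalGroup G]
    [TopologicalSpace X] [MulAction G X] [ContinuousSMul G X] (n : ℕ) :
    (∃ A : ℕ → Set X, IsGCatSequence G A n ∧
        ∀ (m : ℕ) (B : ℕ → Set X), IsGCatSequence G B m → n ≤ m)
      ↔ eqvCat G X = n :=
  minimal_gcatSequence_iff_eqvCat_general n
end

section
/- Let G be a compact Hausdorff topological group acting continuously on a Hausdorff space X. Suppose X is G-connected and α ∈ X^G is a fixed point. Then every G-categorical subset U of X is equivariantly contractible to α: there exists a G-homotopy H : U × [0,1] → X with H(x,0) = x and H(x,1) = α for all x ∈ U. -/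
open Set unitInterval

/-- The set of points of `X` fixed by every element of a subgroup `H ≤ G`. -/
def fixedBySubgroup (G : Type*) {X : Type*} [Group G] [MulAction G X] (H : Subgroup G) :
    Set X :=
  {x : X | ∀ h ∈ H, h • x = x}

/-- A `G`-space `X` is `G`-connected if for every closed subgroup `H` of `G` the fixed point
set `X^H` is path-connected (any two of its points are joined by a path inside it). -/
def GConnected (G X : Type*) [Group G] [TopologicalSpace G] [TopologicalSpace X]
    [MulAction G X] : Prop :=
  ∀ H : Subgroup G, IsClosed (H : Set G) →
    ∀ x ∈ fixedBySubgroup G (X := X) H, ∀ y ∈ fixedBySubgroup G (X := X) H,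
      JoinedIn (fixedBySubgroup G (X := X) H) x y

/-!
Let `K` be a `G`-homotopy deforming `U` into an orbit `Gz`. The stabilizer `G_z` is closed, so
`G`-connectedness gives a path `γ` from `z` to `α` inside `X^{G_z}`. Since `γ` is fixed by `G_z`,
the formula `(g • z, t) ↦ g • γ t` is a well-defined `G`-homotopy contracting the orbit to `α`; it
is continuous because `G × I → Gz × I` is a continuous surjection from a compact space onto a
Hausdorff one, hence a quotient map. Concatenating `K` with this contraction proves the theorem.
-/

open MulAction

section

variable {G X : Type*} [Group G] [MulAction G X]

theorem mem_smulOrbit_smul (g : G) (z : X) : g • z ∈ smulOrbit G z := ⟨g, rfl⟩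

theorem smul_eq_smul_of_mem_fixedBySubgroup_stabilizer {z y : X}
    (hy : y ∈ fixedBySubgroup G (stabilizer G z)) {g g' : G} (h : g • z = g' • z) :
    g • y = g' • y := by
  have hmem : g⁻¹ * g' ∈ stabilizer G z := by
    rw [mem_stabilizer_iff, mul_smul, ← h, inv_smul_smul]
  calc g • y = g • (g⁻¹ * g') • y := by rw [hy _ hmem]
    _ = g' • y := by rw [smul_smul, mul_inv_cancel_left]

variable [TopologicalSpace X]

theorem isGHomotopy_homotopy_trans {U : Set X} {f₀ f₁ f₂ : C(U, X)}
    {F : f₀.Homotopy f₁} {F' : f₁.Homotopy f₂}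
    (hF : IsGHomotopy G U fun p => F (p.2, p.1)) (hF' : IsGHomotopy G U fun p => F' (p.2, p.1)) :
    IsGHomotopy G U fun p => F.trans F' (p.2, p.1) := by
  refine ⟨(F.trans F').continuous.comp continuous_swap, fun g x hgx t => ?_⟩
  simp only [ContinuousMap.Homotopy.trans_apply]
  split_ifs
  · exact hF.2 g x hgx _
  · exact hF'.2 g x hgx _

theorem exists_isGHomotopy_trans {U V : Set X} {K : U × I → X} (hK : IsGHomotopy G U K)
    (hK0 : ∀ x : U, K (x, 0) = x) (hKV : ∀ x : U, K (x, 1) ∈ V) {F : V × I → X}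
    (hF : IsGHomotopy G V F) (hF0 : ∀ y : V, F (y, 0) = y) :
    ∃ H : U × I → X, IsGHomotopy G U H ∧ (∀ x : U, H (x, 0) = x) ∧
      ∀ x : U, H (x, 1) = F (⟨K (x, 1), hKV x⟩, 1) := by
  have hK1 : Continuous fun x : U => K (x, 1) := hK.1.comp (.prodMk_left 1)
  let K' : ContinuousMap.Homotopy ⟨Subtype.val, continuous_subtype_val⟩ ⟨_, hK1⟩ :=
    { toFun := fun p => K (p.2, p.1)
      continuous_toFun := hK.1.comp continuous_swap
      map_zero_left := hK0
      map_one_left := fun _ => rfl }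
  have hFK : Continuous fun p : I × U => F (⟨K (p.2, 1), hKV p.2⟩, p.1) :=
    hF.1.comp (((hK1.comp continuous_snd).subtype_mk _).prodMk continuous_fst)
  let F' : ContinuousMap.Homotopy ⟨_, hK1⟩ ⟨_, hFK.comp (.prodMk_right 1)⟩ :=
    { toFun := fun p => F (⟨K (p.2, 1), hKV p.2⟩, p.1)
      continuous_toFun := hFK
      map_zero_left := fun _ => hF0 _
      map_one_left := fun _ => rfl }
  have hF'G : IsGHomotopy G U fun p => F' (p.2, p.1) := by
    refine ⟨hFK.comp continuous_swap, fun g x hgx t => ?_⟩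
    have hgK : g • K (x, 1) = K (⟨g • (x : X), hgx⟩, 1) := hK.2 g x hgx 1
    refine (hF.2 g _ (hgK ▸ hKV _) t).trans ?_
    exact congrArg (fun y => F (y, t)) (Subtype.ext hgK)
  exact ⟨fun p => K'.trans F' (p.2, p.1), isGHomotopy_homotopy_trans (F := K') hK hF'G,
    fun x => (K'.trans F').apply_zero x, fun x => (K'.trans F').apply_one x⟩

variable [TopologicalSpace G] [ContinuousSMul G X]

theorem isClosed_stabilizer [T1Space X] (z : X) : IsClosed (stabilizer G z : Set G) :=
  isClosed_singleton.preimage (continuous_id.smul continuous_const)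

def smulOrbitMapProd (z : X) (Y : Type*) [TopologicalSpace Y] : C(G × Y, smulOrbit G z × Y) :=
  ⟨fun p => (⟨p.1 • z, mem_smulOrbit_smul p.1 z⟩, p.2),
    ((continuous_fst.smul continuous_const).subtype_mk _).prodMk continuous_snd⟩

variable [CompactSpace G] [T2Space X]

theorem isQuotientMap_smulOrbitMapProd (z : X) (Y : Type*) [TopologicalSpace Y]
    [CompactSpace Y] [T2Space Y] : Topology.IsQuotientMap (smulOrbitMapProd (G := G) z Y) := by
  refine (map_continuous _).isClosedMap.isQuotientMap (map_continuous _) ?_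
  rintro ⟨⟨_, g, rfl⟩, y⟩
  exact ⟨(g, y), rfl⟩

theorem exists_isGHomotopy_smulOrbit_contract {z α : X}
    (hzα : JoinedIn (fixedBySubgroup G (stabilizer G z)) z α) (hα : α ∈ fixedPts G X) :
    ∃ F : smulOrbit G z × I → X, IsGHomotopy G (smulOrbit G z) F ∧
      (∀ y : smulOrbit G z, F (y, 0) = y) ∧ ∀ y : smulOrbit G z, F (y, 1) = α := by
  obtain ⟨γ, hγ⟩ := hzα
  let f : C(G × I, X) := ⟨fun p => p.1 • γ p.2, by fun_prop⟩
  have hf : Function.FactorsThrough f (smulOrbitMapProd z I) := fun a b hab => by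
    simp only [smulOrbitMapProd, ContinuousMap.coe_mk, Prod.mk.injEq, Subtype.mk.injEq] at hab
    change a.1 • γ a.2 = b.1 • γ b.2
    rw [hab.2]
    exact smul_eq_smul_of_mem_fixedBySubgroup_stabilizer (hγ _) hab.1
  let F := (isQuotientMap_smulOrbitMapProd z I).lift f hf
  have hF (g : G) (y : smulOrbit G z) (hy : (y : X) = g • z) (t : I) : F (y, t) = g • γ t := by
    obtain rfl : y = ⟨g • z, mem_smulOrbit_smul g z⟩ := Subtype.ext hy
    exact DFunLike.congr_fun ((isQuotientMap_smulOrbitMapProd z I).lift_comp f hf) (g, t)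
  refine ⟨F, ⟨F.continuous, ?_⟩, ?_, ?_⟩
  · rintro g ⟨_, g', rfl⟩ hgy t
    rw [hF g' _ rfl, hF (g * g') _ (mul_smul g g' z).symm, smul_smul]
  · rintro ⟨_, g, rfl⟩
    rw [hF g _ rfl, γ.source]
  · rintro ⟨_, g, rfl⟩
    rw [hF g _ rfl, γ.target, hα g]

end

theorem gconnected_gcategorical_contractible_general
    {G X : Type*} [Group G] [TopologicalSpace G] [CompactSpace G]
    [TopologicalSpace X] [T2Space X] [MulAction G X] [ContinuousSMul G X]
    (hGc : GConnected G X) (α : X) (hα : α ∈ fixedPts G X)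
    (U : Set X) (hU : IsGCategorical G U) :
    ∃ H : U × I → X, IsGHomotopy G U H ∧ (∀ x : U, H (x, 0) = x) ∧
      ∀ x : U, H (x, 1) = α := by
  obtain ⟨-, -, K, hK, hK0, z, hKz⟩ := hU
  have hzα : JoinedIn (fixedBySubgroup G (stabilizer G z)) z α :=
    hGc _ (isClosed_stabilizer z) z (fun _ hg => hg) α (fun g _ => hα g)
  obtain ⟨F, hF, hF0, hF1⟩ := exists_isGHomotopy_smulOrbit_contract hzα hα
  obtain ⟨H, hH, hH0, hH1⟩ := exists_isGHomotopy_trans hK hK0 hKz hF hF0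
  exact ⟨H, hH, hH0, fun x => (hH1 x).trans (hF1 _)⟩

/-- Let `G` be a compact Hausdorff topological group acting continuously on a
Hausdorff space `X`. Suppose `X` is `G`-connected and `α ∈ X^G` is a fixed point. Then every
`G`-categorical subset `U` of `X` is equivariantly contractible to `α`: there is a
`G`-homotopy `H : U × [0,1] → X` with `H(x,0) = x` and `H(x,1) = α` for all `x ∈ U`. -/
theorem gconnected_gcategorical_contractible
    {G X : Type*} [Group G] [TopologicalSpace G] [IsTopologicalGroup G] [CompactSpace G]
    [T2Space G] [TopologicalSpace X] [T2Space X] [MulAction G X] [ContinuousSMul G X]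
    (hGc : GConnected G X) (α : X) (hα : α ∈ fixedPts G X)
    (U : Set X) (hU : IsGCategorical G U) :
    ∃ H : U × I → X, IsGHomotopy G U H ∧ (∀ x : U, H (x, 0) = x) ∧
      ∀ x : U, H (x, 1) = α :=
  gconnected_gcategorical_contractible_general hGc α hα U hU
end

section
/- Let G be a compact Hausdorff topological group acting continuously on Hausdorff spaces X and Y, and give X × Y the diagonal G-action. Suppose X and Y are G-connected, X × Y is completely normal, X^G ≠ ∅ and Y^G ≠ ∅. Then cat_G(X × Y) ≤ cat_G(X) + cat_G(Y) − 1. -/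
open Set unitInterval

/-!
Let `U₁, …, Uₘ` and `V₁, …, Vₙ` be `G`-categorical covers of `X` and `Y`. Urysohn functions
maximised over orbits (continuous because `G` is compact) give invariant bumps `uᵢ` on `Uᵢ` and
`vⱼ` on `Vⱼ`. For each level `l`, the points where `uᵢ(x) vⱼ(y)` with `i + j = l` is positive
and strictly larger than every other product of that level form disjoint open invariant sets
`Pᵢⱼ ⊆ Uᵢ × Vⱼ`, and every point lies in some `Pᵢⱼ` (take `i`, `j` to be the last maximisers).

Since `X` is `G`-connected and has a fixed point `x₀`, every `G`-categorical set `G`-contracts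
to `x₀`: follow its homotopy into an orbit `G z`, then move `g z` to `x₀` along `g γ`, where `γ`
is a path from `z` to `x₀` in `X^{G_z}`. Hence each `Pᵢⱼ`, and each disjoint union of one level,
`G`-contracts to `(x₀, y₀)`, and the `m + n - 1` levels cover `X × Y`. Normality of `X` and `Y`
comes from complete normality of `X × Y`.
-/

theorem isInvariantSet_iUnion {G X ι : Type*} [SMul G X] {U : ι → Set X}
    (hU : ∀ i, IsInvariantSet G (U i)) : IsInvariantSet G (⋃ i, U i) := by
  intro g x hx
  obtain ⟨i, hi⟩ := mem_iUnion.1 hx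
  exact mem_iUnion.2 ⟨i, hU i g x hi⟩

section Invariant
variable {G X : Type*} [Group G] [MulAction G X]

theorem IsInvariantSet.smul_mem_iff {U : Set X} (hU : IsInvariantSet G U) (g : G) {x : X} :
    g • x ∈ U ↔ x ∈ U :=
  ⟨fun h => by simpa using hU g⁻¹ _ h, hU g x⟩

theorem iSup_smul_smul (f : X → ℝ) (h : G) (x : X) :
    ⨆ g : G, f (g • h • x) = ⨆ g : G, f (g • x) := by
  simp_rw [smul_smul]
  exact (Equiv.mulRight h).iSup_comp (g := fun g => f (g • x))

end Invariant

section OrbitSup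
variable {G X : Type*} [Group G] [TopologicalSpace G] [CompactSpace G]
  [TopologicalSpace X] [MulAction G X] [ContinuousSMul G X]

theorem continuous_iSup_smul {f : X → ℝ} (hf : Continuous f) :
    Continuous fun x => ⨆ g : G, f (g • x) := by
  have := isCompact_univ.continuous_sSup (f := fun x (g : G) => f (g • x))
    (hf.comp (continuous_snd.smul continuous_fst))
  simpa only [image_univ, sSup_range] using this

theorem le_iSup_smul_self {f : X → ℝ} (hf : Continuous f) (x : X) :
    f x ≤ ⨆ g : G, f (g • x) := by
  have hcont : Continuous fun g : G => f (g • x) := hf.comp (continuous_id.smul continuous_const)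
  simpa using le_ciSup (isCompact_range hcont).bddAbove (1 : G)

theorem exists_invariant_bumps [NormalSpace X] {ι : Type*} [Finite ι] {U : ι → Set X}
    (hUo : ∀ i, IsOpen (U i)) (hUinv : ∀ i, IsInvariantSet G (U i)) (hU : ⋃ i, U i = univ) :
    ∃ u : ι → X → ℝ, (∀ i, Continuous (u i)) ∧ (∀ i (g : G) x, u i (g • x) = u i x) ∧
      (∀ i x, 0 ≤ u i x) ∧ (∀ i, ∀ x ∉ U i, u i x = 0) ∧ ∀ x, ∃ i, 0 < u i x := by
  obtain ⟨V, hVc, -, hVU⟩ :=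
    exists_subset_iUnion_closure_subset isClosed_univ hUo (fun x _ => toFinite _) hU.ge
  have : ∀ i, ∃ f : C(X, ℝ), EqOn f 0 (U i)ᶜ ∧ EqOn f 1 (closure (V i)) ∧
      ∀ x, f x ∈ Icc (0 : ℝ) 1 := fun i =>
    exists_continuous_zero_one_of_isClosed (hUo i).isClosed_compl isClosed_closure
      (disjoint_compl_left_iff_subset.2 (hVU i))
  choose f hf0 hf1 hf01 using this
  refine ⟨fun i x => ⨆ g : G, f i (g • x), fun i => continuous_iSup_smul (f i).continuous,
    fun i g x => iSup_smul_smul _ g x, fun i x => ?_, fun i x hx => ?_, fun x => ?_⟩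
  · exact (hf01 i x).1.trans (le_iSup_smul_self (f i).continuous x)
  · have : ∀ g : G, f i (g • x) = 0 := fun g => hf0 i ((hUinv i).smul_mem_iff g |>.not.2 hx)
    simp only [this, ciSup_const]
  · obtain ⟨i, hi⟩ := mem_iUnion.1 (hVc (mem_univ x))
    refine ⟨i, zero_lt_one.trans_le ?_⟩
    simpa [hf1 i (subset_closure hi)] using le_iSup_smul_self (G := G) (f i).continuous x

end OrbitSup

def IsGContractibleTo (G : Type*) {X : Type*} [SMul G X] [TopologicalSpace X] (U : Set X)
    (z₀ : X) : Prop :=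
  ∃ Φ : U × I → X, IsGHomotopy G U Φ ∧ (∀ x : U, Φ (x, 0) = x) ∧ ∀ x : U, Φ (x, 1) = z₀

section Homotopy
variable {G X Y : Type*} [TopologicalSpace X] [TopologicalSpace Y]

theorem IsGHomotopy.exists_trans [SMul G X] {U S : Set X} {F : U × I → X}
    (hF : IsGHomotopy G U F) (hFS : ∀ x, F (x, 1) ∈ S) {K : S × I → X} (hK : IsGHomotopy G S K)
    (hK0 : ∀ a, K (a, 0) = a) :
    ∃ Φ : U × I → X, IsGHomotopy G U Φ ∧ (∀ x, Φ (x, 0) = F (x, 0)) ∧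
      ∀ x, Φ (x, 1) = K (⟨F (x, 1), hFS x⟩, 1) := by
  let γ₁ : ∀ x : U, Path (F (x, 0)) (F (x, 1)) := fun x =>
    ⟨⟨fun t => F (x, t), hF.1.comp (Continuous.prodMk_right x)⟩, rfl, rfl⟩
  let γ₂ : ∀ x : U, Path (F (x, 1)) (K (⟨F (x, 1), hFS x⟩, 1)) := fun x =>
    ⟨⟨fun t => K (⟨F (x, 1), hFS x⟩, t), hK.1.comp (Continuous.prodMk_right _)⟩, hK0 _, rfl⟩
  have hγ₂ : Continuous ↿γ₂ := hK.1.comp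
    (((hF.1.comp (continuous_fst.prodMk continuous_const)).subtype_mk _).prodMk continuous_snd)
  refine ⟨fun p => ((γ₁ p.1).trans (γ₂ p.1)) p.2,
    ⟨Path.trans_continuous_family γ₁ hF.1 γ₂ hγ₂, fun g x hgx t => ?_⟩,
    fun x => Path.source _, fun x => Path.target _⟩
  have hFg : g • F (x, 1) = F (⟨g • (x : X), hgx⟩, 1) := hF.2 g x hgx 1
  simp only [Path.trans_apply]
  split_ifs
  · exact hF.2 g x hgx _
  · exact (hK.2 g _ (hFg ▸ hFS _) _).trans (congrArg (fun a => K (a, _)) (Subtype.ext hFg))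

theorem IsGContractibleTo.mono [SMul G X] {U W : Set X} {z₀ : X} (hW : IsGContractibleTo G W z₀)
    (hUW : U ⊆ W) : IsGContractibleTo G U z₀ := by
  obtain ⟨Φ, ⟨hΦc, hΦg⟩, hΦ0, hΦ1⟩ := hW
  exact ⟨fun p => Φ (inclusion hUW p.1, p.2),
    ⟨hΦc.comp ((continuous_inclusion hUW).prodMap continuous_id),
      fun g x hgx t => hΦg g _ (hUW hgx) t⟩, fun x => hΦ0 _, fun x => hΦ1 _⟩

theorem IsGContractibleTo.prod [SMul G X] [SMul G Y] {U : Set X} {V : Set Y} {x₀ : X} {y₀ : Y}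
    (hU : IsGContractibleTo G U x₀) (hV : IsGContractibleTo G V y₀) :
    IsGContractibleTo G (U ×ˢ V) (x₀, y₀) := by
  obtain ⟨F, ⟨hFc, hFg⟩, hF0, hF1⟩ := hU
  obtain ⟨K, ⟨hKc, hKg⟩, hK0, hK1⟩ := hV
  let fst : ↥(U ×ˢ V) → U := fun p => ⟨p.1.1, p.2.1⟩
  let snd : ↥(U ×ˢ V) → V := fun p => ⟨p.1.2, p.2.2⟩
  have hfst : Continuous fst := (continuous_subtype_val.fst).subtype_mk _
  have hsnd : Continuous snd := (continuous_subtype_val.snd).subtype_mk _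
  refine ⟨fun q => (F (fst q.1, q.2), K (snd q.1, q.2)),
    ⟨(hFc.comp (hfst.prodMap continuous_id)).prodMk (hKc.comp (hsnd.prodMap continuous_id)),
      fun g p hgp t => Prod.ext (hFg g _ hgp.1 t) (hKg g _ hgp.2 t)⟩,
    fun p => Prod.ext (hF0 _) (hK0 _), fun p => Prod.ext (hF1 _) (hK1 _)⟩

theorem IsGContractibleTo.isGCategorical [Monoid G] [MulAction G X] {U : Set X} {z₀ : X}
    (h : IsGContractibleTo G U z₀) (hUo : IsOpen U) (hUinv : IsInvariantSet G U) :
    IsGCategorical G U :=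
  let ⟨Φ, hΦ, hΦ0, hΦ1⟩ := h
  ⟨hUo, hUinv, Φ, hΦ, hΦ0, z₀, fun x => ⟨1, (one_smul G z₀).trans (hΦ1 x).symm⟩⟩

end Homotopy

theorem isGContractibleTo_iUnion {G Z ι : Type*} [TopologicalSpace Z] [SMul G Z]
    {O : ι → Set Z} {z₀ : Z} (hOo : ∀ k, IsOpen (O k)) (hOinv : ∀ k, IsInvariantSet G (O k))
    (hOd : Pairwise fun k k' => Disjoint (O k) (O k')) (hO : ∀ k, IsGContractibleTo G (O k) z₀) :
    IsGContractibleTo G (⋃ k, O k) z₀ := by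
  choose Φ hΦ hΦ0 hΦ1 using hO
  choose c hc using fun x : ↥(⋃ k, O k) => mem_iUnion.1 x.2
  have hc_eq : ∀ (x : ↥(⋃ k, O k)) k, (x : Z) ∈ O k → c x = k := fun x k hk =>
    hOd.eq (not_disjoint_iff.2 ⟨x, hc x, hk⟩)
  let Ψ : ↥(⋃ k, O k) × I → Z := fun q => Φ (c q.1) (⟨q.1, hc q.1⟩, q.2)
  have hΨ : ∀ (x : ↥(⋃ k, O k)) k (hk : (x : Z) ∈ O k) t, Ψ (x, t) = Φ k (⟨x, hk⟩, t) := by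
    intro x k hk t
    cases hc_eq x k hk
    rfl
  refine ⟨Ψ, ⟨continuous_iff_continuousAt.2 fun ⟨x, t⟩ => ?_, fun g x hgx t => ?_⟩,
    fun x => (hΨ x _ (hc x) 0).trans (hΦ0 _ _), fun x => (hΨ x _ (hc x) 1).trans (hΦ1 _ _)⟩
  · let N : Set (↥(⋃ k, O k) × I) := {q | (q.1 : Z) ∈ O (c x)}
    have hN : IsOpen N := (hOo _).preimage (continuous_subtype_val.comp continuous_fst)
    refine ContinuousOn.continuousAt ?_ (hN.mem_nhds (hc x))
    rw [continuousOn_iff_continuous_domRestrict]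
    have : N.domRestrict Ψ = fun q => Φ (c x) (⟨q.1.1, q.2⟩, q.1.2) :=
      funext fun q => hΨ q.1.1 _ q.2 q.1.2
    rw [this]
    exact (hΦ _).1.comp (((continuous_subtype_val.comp
      (continuous_fst.comp continuous_subtype_val)).subtype_mk _).prodMk
      (continuous_snd.comp continuous_subtype_val))
  · have hgx' : g • (x : Z) ∈ O (c x) := hOinv _ g _ (hc x)
    rw [hΨ x _ (hc x), hΨ _ _ hgx']
    exact (hΦ _).2 g _ hgx' t

section Orbit
variable {G X : Type*} [Group G] [TopologicalSpace G] [CompactSpace G]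
  [TopologicalSpace X] [T2Space X] [MulAction G X] [ContinuousSMul G X]

/-- Take a path `γ` from `z` to `x₀` inside `X^{G_z}`; then `g • z ↦ g • γ` is well defined and
contracts the orbit of `z`. -/
theorem isGContractibleTo_smulOrbit (hX : GConnected G X) {x₀ : X} (hx₀ : x₀ ∈ fixedPts G X)
    (z : X) : IsGContractibleTo G (smulOrbit G z) x₀ := by
  let S := MulAction.stabilizer G z
  have hS : IsClosed (S : Set G) :=
    isClosed_singleton.preimage (continuous_id.smul continuous_const : Continuous (· • z))
  obtain ⟨γ, hγS⟩ := hX S hS z (fun _ hg => hg) x₀ (fun g _ => hx₀ g)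
  have smul_γ : ∀ g g' : G, g • z = g' • z → ∀ t, g • γ t = g' • γ t := by
    intro g g' h t
    have hgg' : g'⁻¹ * g ∈ S := by rw [MulAction.mem_stabilizer_iff, mul_smul, h, inv_smul_smul]
    calc g • γ t = g' • (g'⁻¹ * g) • γ t := by rw [smul_smul, mul_inv_cancel_left]
      _ = g' • γ t := by rw [hγS t _ hgg']
  have : ∀ a : smulOrbit G z, ∃ g : G, g • z = a := fun a => a.2
  choose sec hsec using this
  let ρ : smulOrbit G z × I → X := fun p => sec p.1 • γ p.2
  have hρ : ∀ (a : smulOrbit G z) g, g • z = a → ∀ t, ρ (a, t) = g • γ t := fun a g hg t =>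
    smul_γ _ _ ((hsec a).trans hg.symm) t
  let q : G × I → smulOrbit G z × I := fun p => (⟨p.1 • z, p.1, rfl⟩, p.2)
  have hq : Continuous q := ((continuous_fst.smul continuous_const).subtype_mk _).prodMk
    continuous_snd
  have hq_quot : Topology.IsQuotientMap q := hq.isClosedMap.isQuotientMap hq
    fun ⟨⟨_, g, hg⟩, t⟩ => ⟨(g, t), Prod.ext (Subtype.ext hg) rfl⟩
  have hρq : ρ ∘ q = fun p => p.1 • γ p.2 := funext fun p => hρ _ p.1 rfl p.2
  refine ⟨ρ, ⟨?_, fun g a hga t => ?_⟩, fun a => ?_, fun a => ?_⟩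
  · rw [hq_quot.continuous_iff, hρq]
    exact continuous_fst.smul (γ.continuous.comp continuous_snd)
  · rw [hρ a _ (hsec a), hρ _ (g * sec a) (by rw [mul_smul, hsec a]), mul_smul]
  · rw [hρ a _ (hsec a), γ.source, hsec a]
  · rw [hρ a _ (hsec a), γ.target, hx₀]

theorem IsGCategorical.isGContractibleTo (hX : GConnected G X) {x₀ : X}
    (hx₀ : x₀ ∈ fixedPts G X) {U : Set X} (hU : IsGCategorical G U) :
    IsGContractibleTo G U x₀ := by
  obtain ⟨-, -, H, hH, hH0, z, hHz⟩ := hU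
  obtain ⟨ρ, hρ, hρ0, hρ1⟩ := isGContractibleTo_smulOrbit hX hx₀ z
  obtain ⟨Φ, hΦ, hΦ0, hΦ1⟩ := hH.exists_trans hHz hρ hρ0
  exact ⟨Φ, hΦ, fun x => (hΦ0 x).trans (hH0 x), fun x => (hΦ1 x).trans (hρ1 _)⟩

end Orbit

theorem exists_last_argmax {ι α : Type*} [LinearOrder ι] [Finite ι] [Nonempty ι] [LinearOrder α]
    (a : ι → α) : ∃ i, ∀ r, a r ≤ a i ∧ (a i ≤ a r → r ≤ i) := by
  cases nonempty_fintype ι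
  obtain ⟨i, -, hi⟩ :=
    Finset.univ.exists_max_image (fun i => toLex (a i, i)) Finset.univ_nonempty
  refine ⟨i, fun r => ?_⟩
  rcases Prod.Lex.le_iff.1 (hi r (Finset.mem_univ r)) with h | ⟨h, h'⟩
  · exact ⟨h.le, fun h'' => absurd h'' (not_le.2 h)⟩
  · exact ⟨h.le, fun _ => h'⟩

/-- At a last argmax `(i, j)` of `a` and `b`, moving `r` below `i` along `r + s = i + j` forces
`s` above `j`, where `b` drops strictly (and symmetrically). -/
theorem exists_mul_lt_of_add_eq {m n : ℕ} {a : Fin m → ℝ} {b : Fin n → ℝ} (ha : ∀ i, 0 ≤ a i)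
    (hb : ∀ j, 0 ≤ b j) (ha' : ∃ i, 0 < a i) (hb' : ∃ j, 0 < b j) :
    ∃ k : Fin m × Fin n, 0 < a k.1 * b k.2 ∧ ∀ k' : Fin m × Fin n,
      (k'.1 : ℕ) + k'.2 = k.1 + k.2 → k' ≠ k → a k'.1 * b k'.2 < a k.1 * b k.2 := by
  have : Nonempty (Fin m) := ⟨ha'.choose⟩
  have : Nonempty (Fin n) := ⟨hb'.choose⟩
  obtain ⟨i, hi⟩ := exists_last_argmax a
  obtain ⟨j, hj⟩ := exists_last_argmax b
  have hai : 0 < a i := ha'.choose_spec.trans_le (hi _).1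
  have hbj : 0 < b j := hb'.choose_spec.trans_le (hj _).1
  refine ⟨(i, j), mul_pos hai hbj, ?_⟩
  rintro ⟨r, s⟩ (hrs : (r : ℕ) + s = i + j) hne
  rcases lt_trichotomy (r : ℕ) i with hr | hr | hr
  · have hbs : b s < b j := lt_of_not_ge fun h => by have := (hj s).2 h; omega
    calc a r * b s ≤ a i * b s := mul_le_mul_of_nonneg_right (hi r).1 (hb s)
      _ < a i * b j := mul_lt_mul_of_pos_left hbs hai
  · exact absurd (Prod.ext (Fin.ext hr) (Fin.ext (by omega : (s : ℕ) = j))) hne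
  · have har : a r < a i := lt_of_not_ge fun h => by have := (hi r).2 h; omega
    calc a r * b s ≤ a r * b j := mul_le_mul_of_nonneg_left (hj s).1 (ha r)
      _ < a i * b j := mul_lt_mul_of_pos_right har hbj

section StrictMaxPiece
variable {κ Z : Type*} (ℓ : κ → ℕ) (w : κ → Z → ℝ)

def strictMaxPiece (k : κ) : Set Z :=
  {z | 0 < w k z ∧ ∀ k', ℓ k' = ℓ k → k' ≠ k → w k' z < w k z}

variable {ℓ w}

theorem isOpen_strictMaxPiece [TopologicalSpace Z] [Finite κ] (hw : ∀ k, Continuous (w k))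
    (k : κ) : IsOpen (strictMaxPiece ℓ w k) := by
  simp only [strictMaxPiece, ofPred_and, ofPred_forall]
  exact (isOpen_lt continuous_const (hw k)).inter <| isOpen_iInter_of_finite fun k' =>
    isOpen_iInter_of_finite fun _ => isOpen_iInter_of_finite fun _ => isOpen_lt (hw k') (hw k)

theorem isInvariantSet_strictMaxPiece {G : Type*} [SMul G Z]
    (hw : ∀ k (g : G) z, w k (g • z) = w k z) (k : κ) :
    IsInvariantSet G (strictMaxPiece ℓ w k) := by
  intro g z hz
  simpa only [strictMaxPiece, mem_ofPred_eq, hw] using hz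

theorem disjoint_strictMaxPiece {k k' : κ} (hℓ : ℓ k = ℓ k') (hne : k ≠ k') :
    Disjoint (strictMaxPiece ℓ w k) (strictMaxPiece ℓ w k') :=
  disjoint_left.2 fun _ hk hk' => (hk.2 k' hℓ.symm hne.symm).asymm (hk'.2 k hℓ hne)

end StrictMaxPiece

theorem exists_isGCategorical_cover_prod {G X Y : Type*} [Group G] [TopologicalSpace G]
    [CompactSpace G] [TopologicalSpace X] [T2Space X] [NormalSpace X] [MulAction G X]
    [ContinuousSMul G X] [TopologicalSpace Y] [T2Space Y] [NormalSpace Y] [MulAction G Y]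
    [ContinuousSMul G Y] (hX : GConnected G X) (hY : GConnected G Y)
    {x₀ : X} (hx₀ : x₀ ∈ fixedPts G X) {y₀ : Y} (hy₀ : y₀ ∈ fixedPts G Y)
    {m n : ℕ} {U : Fin m → Set X} (hU : ∀ i, IsGCategorical G (U i)) (hUc : ⋃ i, U i = univ)
    {V : Fin n → Set Y} (hV : ∀ j, IsGCategorical G (V j)) (hVc : ⋃ j, V j = univ) :
    ∃ W : Fin (m + n - 1) → Set (X × Y), (∀ l, IsGCategorical G (W l)) ∧ ⋃ l, W l = univ := by
  obtain ⟨u, huc, huinv, hu0, husupp, hupos⟩ :=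
    exists_invariant_bumps (fun i => (hU i).1) (fun i => (hU i).2.1) hUc
  obtain ⟨v, hvc, hvinv, hv0, hvsupp, hvpos⟩ :=
    exists_invariant_bumps (fun j => (hV j).1) (fun j => (hV j).2.1) hVc
  let ℓ : Fin m × Fin n → ℕ := fun k => k.1 + k.2
  let P := strictMaxPiece ℓ fun k (p : X × Y) => u k.1 p.1 * v k.2 p.2
  have hPo : ∀ k, IsOpen (P k) := isOpen_strictMaxPiece fun k =>
    ((huc k.1).comp continuous_fst).mul ((hvc k.2).comp continuous_snd)
  have hPinv : ∀ k, IsInvariantSet G (P k) := isInvariantSet_strictMaxPiece fun k g p => by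
    simp only [Prod.smul_fst, Prod.smul_snd, huinv, hvinv]
  have hPsub : ∀ k, P k ⊆ U k.1 ×ˢ V k.2 := fun k p hp =>
    ⟨by_contra fun hx => hp.1.ne' (by simp [husupp _ _ hx]),
      by_contra fun hy => hp.1.ne' (by simp [hvsupp _ _ hy])⟩
  have hPcontr : ∀ k, IsGContractibleTo G (P k) (x₀, y₀) := fun k =>
    (((hU k.1).isGContractibleTo hX hx₀).prod ((hV k.2).isGContractibleTo hY hy₀)).mono (hPsub k)
  refine ⟨fun l => ⋃ k : {k // ℓ k = l}, P k, fun l => ?_, ?_⟩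
  · have hdisj : Pairwise fun k k' : {k // ℓ k = l} => Disjoint (P k) (P k') := fun k k' hne =>
      disjoint_strictMaxPiece (k.2.trans k'.2.symm) (Subtype.coe_ne_coe.2 hne)
    exact (isGContractibleTo_iUnion (O := fun k : {k // ℓ k = l} => P k) (fun k => hPo k)
      (fun k => hPinv k) hdisj fun k => hPcontr k).isGCategorical
      (isOpen_iUnion fun k => hPo k) (isInvariantSet_iUnion fun k => hPinv k)
  · refine eq_univ_of_forall fun p => ?_
    obtain ⟨k, hk⟩ := exists_mul_lt_of_add_eq (hu0 · p.1) (hv0 · p.2) (hupos p.1) (hvpos p.2)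
    have hℓ : ℓ k < m + n - 1 := by simp only [ℓ]; omega
    exact mem_iUnion.2 ⟨⟨ℓ k, hℓ⟩, mem_iUnion.2 ⟨⟨k, rfl⟩, hk⟩⟩

theorem ENat.sInf_mem_of_ne_top {s : Set ℕ∞} (hs : sInf s ≠ ⊤) : sInf s ∈ s :=
  csInf_mem (nonempty_iff_ne_empty.2 fun he => hs (by rw [he, sInf_empty]))

section EqvCat
variable {G X : Type*} [SMul G X] [TopologicalSpace X]

theorem eqvCat_le_of_cover {n : ℕ} {U : Fin n → Set X} (hU : ∀ i, IsGCategorical G (U i))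
    (hUc : ⋃ i, U i = univ) : eqvCat G X ≤ n :=
  sInf_le ⟨n, rfl, U, hU, hUc⟩

theorem exists_cover_of_eqvCat_ne_top (h : eqvCat G X ≠ ⊤) :
    ∃ n : ℕ, eqvCat G X = n ∧
      ∃ U : Fin n → Set X, (∀ i, IsGCategorical G (U i)) ∧ ⋃ i, U i = univ :=
  ENat.sInf_mem_of_ne_top h

end EqvCat

theorem eqvCat_prod_le_general
    {G X Y : Type*} [Group G] [TopologicalSpace G] [CompactSpace G]
    [TopologicalSpace X] [T2Space X] [MulAction G X] [ContinuousSMul G X]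
    [TopologicalSpace Y] [T2Space Y] [MulAction G Y] [ContinuousSMul G Y]
    [CompletelyNormalSpace (X × Y)]
    (hX : GConnected G X) (hY : GConnected G Y)
    (hfX : (fixedPts G X).Nonempty) (hfY : (fixedPts G Y).Nonempty) :
    eqvCat G (X × Y) ≤ eqvCat G X + eqvCat G Y - 1 := by
  obtain ⟨x₀, hx₀⟩ := hfX
  obtain ⟨y₀, hy₀⟩ := hfY
  have : CompletelyNormalSpace X := (isInducing_prodMkLeft y₀).completelyNormalSpace
  have : CompletelyNormalSpace Y := (isInducing_prodMkRight x₀).completelyNormalSpace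
  rcases eq_or_ne (eqvCat G X) ⊤ with hXtop | hXtop
  · simp [hXtop]
  rcases eq_or_ne (eqvCat G Y) ⊤ with hYtop | hYtop
  · simp [hYtop]
  obtain ⟨m, hm, U, hU, hUc⟩ := exists_cover_of_eqvCat_ne_top hXtop
  obtain ⟨n, hn, V, hV, hVc⟩ := exists_cover_of_eqvCat_ne_top hYtop
  obtain ⟨W, hW, hWc⟩ := exists_isGCategorical_cover_prod hX hY hx₀ hy₀ hU hUc hV hVc
  calc eqvCat G (X × Y) ≤ (m + n - 1 : ℕ) := eqvCat_le_of_cover hW hWc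
    _ = eqvCat G X + eqvCat G Y - 1 := by rw [hm, hn]; simp [ENat.natCast_sub]

/-- Let `G` be a compact Hausdorff topological group acting continuously on
Hausdorff spaces `X` and `Y`, and give `X × Y` the diagonal `G`-action. Suppose `X` and `Y`
are `G`-connected, `X × Y` is completely normal, `X^G ≠ ∅` and `Y^G ≠ ∅`. Then
`cat_G(X × Y) ≤ cat_G(X) + cat_G(Y) − 1`. -/
theorem eqvCat_prod_le
    {G X Y : Type*} [Group G] [TopologicalSpace G] [IsTopologicalGroup G] [CompactSpace G]
    [T2Space G] [TopologicalSpace X] [T2Space X] [MulAction G X] [ContinuousSMul G X]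
    [TopologicalSpace Y] [T2Space Y] [MulAction G Y] [ContinuousSMul G Y]
    [CompletelyNormalSpace (X × Y)]
    (hX : GConnected G X) (hY : GConnected G Y)
    (hfX : (fixedPts G X).Nonempty) (hfY : (fixedPts G Y).Nonempty) :
    eqvCat G (X × Y) ≤ eqvCat G X + eqvCat G Y - 1 :=
  eqvCat_prod_le_general hX hY hfX hfY
end
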